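/- There is a constant C > 0 with the following property. Let u : ℝ² → ℝ² be a C^∞, compactly supported, divergence-free vector field and define Γ̄(l) := ⨍_{𝕊} ∫_{ℝ²} u(x) · u(x+ln) dx dn for l ≥ 0. Then Γ̄ is differentiable and |Γ̄'(l)| ≤ C l ∫_{ℝ²} |∇u(x)|² dx for every l ≥ 0; in particular Γ̄'(0) = 0. -/

import Mathlib

/-! STATEMENT 10: `Γ̄` is differentiable with `|Γ̄(l)| ≤ C l ∫ |∇u|²` for all `l ≥ 0` (`C` uniform in `u`); in particular `Γ̄(0) = 0`. -/

open MeasureTheory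

noncomputable section

/-- The plane `ℝ²`. -/
abbrev E2 : Type := EuclideanSpace ℝ (Fin 2)

/-- Partial derivative `∂ᵢ f` of a scalar function on `ℝ²`. -/
def pd (i : Fin 2) (f : E2 → ℝ) (x : E2) : ℝ :=
  fderiv ℝ f x (EuclideanSpace.single i 1)

/-- `|∇u(x)|² = (∂₁u¹)² + (∂₂u²)² + (∂₁u²)² + (∂₂u¹)²`. -/
def gradSq (u : E2 → E2) (x : E2) : ℝ :=
  (pd 0 (fun y => u y 0) x) ^ 2 + (pd 1 (fun y => u y 1) x) ^ 2
    + (pd 0 (fun y => u y 1) x) ^ 2 + (pd 1 (fun y => u y 0) x) ^ 2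

/-- The arc-length (surface) measure on the unit circle `𝕊 ⊂ ℝ²`.
Averaging `⨍` against it is averaging with respect to the uniform
probability measure on `𝕊`. -/
def sphσ : Measure (Metric.sphere (0 : E2) 1) := (volume : Measure E2).toSphere

/-- `Γ̄(l) := ⨍_𝕊 ∫_{ℝ²} u(x) · u(x+ln) dx dn`. -/
def GammaBar (u : E2 → E2) (l : ℝ) : ℝ :=
  ⨍ n : Metric.sphere (0 : E2) 1,
    (∫ x : E2, (inner ℝ (u x) (u (x + l • (n : E2))) : ℝ)) ∂sphσ

variable {u : E2 → E2} (hu : ContDiff ℝ (⊤ : ℕ∞) u) (hc : HasCompactSupport u)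

include hu in
lemma pd_eq (i j : Fin 2) (x : E2) :
    pd i (fun y => u y j) x = fderiv ℝ u x (EuclideanSpace.single i 1) j := by
  have hd : DifferentiableAt ℝ u x := (hu.differentiable (by simp)).differentiableAt
  have h : fderiv ℝ ((EuclideanSpace.proj j : E2 →L[ℝ] ℝ) ∘ u) x
      = (fderiv ℝ (EuclideanSpace.proj j : E2 →L[ℝ] ℝ) (u x)).comp (fderiv ℝ u x) :=
    fderiv_comp x ((EuclideanSpace.proj j : E2 →L[ℝ] ℝ).differentiableAt) hd
  rw [ContinuousLinearMap.fderiv] at h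
  have he : (fun y => u y j) = (EuclideanSpace.proj j : E2 →L[ℝ] ℝ) ∘ u := by
    funext y; simp
  rw [pd, he, h]; simp

include hu in
lemma opNorm_sq_le_gradSq (x : E2) : ‖fderiv ℝ u x‖ ^ 2 ≤ gradSq u x := by
  have hb : ∀ v : E2, ‖fderiv ℝ u x v‖ ≤ Real.sqrt (gradSq u x) * ‖v‖ := by
    intro v
    set A := fderiv ℝ u x
    have hv : v = v 0 • EuclideanSpace.single 0 (1:ℝ) + v 1 • EuclideanSpace.single 1 (1:ℝ) := by
      ext i; fin_cases i <;> simp [EuclideanSpace.single_apply]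
    have hAv : ∀ j : Fin 2, A v j = v 0 * A (EuclideanSpace.single 0 1) j
        + v 1 * A (EuclideanSpace.single 1 1) j := by
      intro j
      conv_lhs => rw [hv]
      simp [A.map_add, A.map_smul]
    have hnv : ‖v‖ ^ 2 = (v 0) ^ 2 + (v 1) ^ 2 := by
      rw [EuclideanSpace.norm_eq]
      rw [Real.sq_sqrt (by positivity)]
      simp [Fin.sum_univ_two, sq_abs]
    have hnAv : ‖A v‖ ^ 2 = (A v 0) ^ 2 + (A v 1) ^ 2 := by
      rw [EuclideanSpace.norm_eq, Real.sq_sqrt (by positivity)]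
      simp [Fin.sum_univ_two, sq_abs]
    have hg : gradSq u x = (A (EuclideanSpace.single 0 1) 0) ^ 2 + (A (EuclideanSpace.single 1 1) 1) ^ 2
        + (A (EuclideanSpace.single 0 1) 1) ^ 2 + (A (EuclideanSpace.single 1 1) 0) ^ 2 := by
      rw [gradSq, pd_eq hu, pd_eq hu, pd_eq hu, pd_eq hu]
    have key : ‖A v‖ ^ 2 ≤ gradSq u x * ‖v‖ ^ 2 := by
      rw [hnAv, hnv, hg, hAv 0, hAv 1]
      nlinarith [sq_nonneg (v 0 * A (EuclideanSpace.single 1 1) 0 - v 1 * A (EuclideanSpace.single 0 1) 0),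
        sq_nonneg (v 0 * A (EuclideanSpace.single 1 1) 1 - v 1 * A (EuclideanSpace.single 0 1) 1)]
    have h1 : (0:ℝ) ≤ gradSq u x := by
      rw [hg]; positivity
    calc ‖A v‖ = Real.sqrt (‖A v‖ ^ 2) := by rw [Real.sqrt_sq (norm_nonneg _)]
      _ ≤ Real.sqrt (gradSq u x * ‖v‖ ^ 2) := Real.sqrt_le_sqrt key
      _ = Real.sqrt (gradSq u x) * ‖v‖ := by
          rw [Real.sqrt_mul h1, Real.sqrt_sq (norm_nonneg _)]
  have hop : ‖fderiv ℝ u x‖ ≤ Real.sqrt (gradSq u x) :=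
    (fderiv ℝ u x).opNorm_le_bound (Real.sqrt_nonneg _) hb
  have h1 : (0:ℝ) ≤ gradSq u x := by
    rw [gradSq]; positivity
  calc ‖fderiv ℝ u x‖ ^ 2 ≤ Real.sqrt (gradSq u x) ^ 2 := by
        have := norm_nonneg (fderiv ℝ u x); nlinarith
    _ = gradSq u x := Real.sq_sqrt h1

lemma gradSq_nonneg (u : E2 → E2) (x : E2) : 0 ≤ gradSq u x := by
  rw [gradSq]; positivity

include hu hc in
lemma gradSq_integrable : Integrable (gradSq u) := by
  have hDu : Continuous (fderiv ℝ u) := ((hu.of_le (by simp) : ContDiff ℝ 1 u)).continuous_fderiv (by simp)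
  have hpd : ∀ i j : Fin 2, Continuous (fun x => pd i (fun y => u y j) x) := by
    intro i j
    have : (fun x => pd i (fun y => u y j) x)
        = fun x => fderiv ℝ u x (EuclideanSpace.single i 1) j := by
      funext x; exact pd_eq hu i j x
    rw [this]
    exact (EuclideanSpace.proj j : E2 →L[ℝ] ℝ).continuous.comp
      ((ContinuousLinearMap.apply ℝ E2 (EuclideanSpace.single i (1:ℝ))).continuous.comp hDu)
  have hcont : Continuous (gradSq u) := by
    unfold gradSq
    fun_prop (disch := exact hpd _ _)
  apply hcont.integrable_of_hasCompactSupport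
  apply (hc.fderiv (𝕜 := ℝ)).mono
  intro x hx
  simp only [Function.mem_support] at hx ⊢
  intro h0
  apply hx
  rw [gradSq, pd_eq hu, pd_eq hu, pd_eq hu, pd_eq hu, h0]
  simp

def gg (u : E2 → E2) (m : E2) (l : ℝ) : ℝ := ∫ x : E2, (inner ℝ (u x) (u (x + l • m)) : ℝ)
def gg' (u : E2 → E2) (m : E2) (l : ℝ) : ℝ :=
  ∫ x : E2, (inner ℝ (u x) (fderiv ℝ u (x + l • m) m) : ℝ)

include hu hc in
lemma hasDerivAt_gg (m : E2) (l : ℝ) : HasDerivAt (gg u m) (gg' u m l) l := by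
  have hucont : Continuous u := hu.continuous
  have hDu : Continuous (fderiv ℝ u) := ((hu.of_le (by simp) : ContDiff ℝ 1 u)).continuous_fderiv (by simp)
  obtain ⟨M, hM⟩ := (hc.fderiv (𝕜 := ℝ)).exists_bound_of_continuous hDu
  have hMnn : 0 ≤ M := le_trans (norm_nonneg _) (hM 0)
  have hint : Integrable u := hucont.integrable_of_hasCompactSupport hc
  have h := hasDerivAt_integral_of_dominated_loc_of_deriv_le (μ := (volume : Measure E2))
    (F := fun l x => (inner ℝ (u x) (u (x + l • m)) : ℝ))
    (F' := fun l x => (inner ℝ (u x) (fderiv ℝ u (x + l • m) m) : ℝ))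
    (bound := fun x => ‖u x‖ * (M * ‖m‖)) (x₀ := l) (s := Metric.ball l 1) (Metric.ball_mem_nhds l one_pos)
    ?meas ?int ?meas' ?bound ?bint ?diff
  · exact h.2
  case meas =>
    filter_upwards with l'
    exact (hucont.inner (hucont.comp (by continuity))).aestronglyMeasurable
  case int =>
    apply (hucont.inner (hucont.comp (by continuity))).integrable_of_hasCompactSupport
    apply hc.mono
    intro x hx
    simp only [Function.mem_support] at hx ⊢
    intro h0; apply hx; rw [h0]; simp
  case meas' =>
    apply Continuous.aestronglyMeasurable
    apply hucont.inner
    have : Continuous fun x : E2 => fderiv ℝ u (x + l • m) := hDu.comp (by continuity)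
    exact (ContinuousLinearMap.apply ℝ E2 m).continuous.comp this
  case bound =>
    filter_upwards with x
    intro l' _
    calc ‖(inner ℝ (u x) (fderiv ℝ u (x + l' • m) m) : ℝ)‖
        ≤ ‖u x‖ * ‖fderiv ℝ u (x + l' • m) m‖ := norm_inner_le_norm _ _
      _ ≤ ‖u x‖ * (M * ‖m‖) := by
          apply mul_le_mul_of_nonneg_left _ (norm_nonneg _)
          calc ‖fderiv ℝ u (x + l' • m) m‖ ≤ ‖fderiv ℝ u (x + l' • m)‖ * ‖m‖ :=
                (fderiv ℝ u (x + l' • m)).le_opNorm m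
            _ ≤ M * ‖m‖ := mul_le_mul_of_nonneg_right (hM _) (norm_nonneg _)
  case bint => exact hint.norm.mul_const _
  case diff =>
    filter_upwards with x
    intro l' _
    have haff : HasDerivAt (fun t : ℝ => x + t • m) m l' := by
      simpa using ((hasDerivAt_id l').smul_const m).const_add x
    have hg : HasDerivAt (fun t : ℝ => u (x + t • m)) (fderiv ℝ u (x + l' • m) m) l' :=
      ((hu.differentiable (by simp) (x + l' • m)).hasFDerivAt).comp_hasDerivAt l' haff
    have := (hasDerivAt_const l' (u x)).inner ℝ hg
    simpa using this

lemma gg_neg (m : E2) : gg u (-m) = gg u m := by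
  funext l
  rw [gg, gg]
  have := integral_add_right_eq_self (μ := (volume : Measure E2))
    (fun x : E2 => (inner ℝ (u x) (u (x + l • m)) : ℝ)) (-(l • m))
  rw [← this]
  congr 1
  funext x
  rw [real_inner_comm]
  congr 2
  · rw [smul_neg]
  · rw [neg_add_cancel_right]

lemma gg'_eq_left (m : E2) (l : ℝ) :
    gg' u m l = ∫ x : E2, (inner ℝ (u (x - l • m)) (fderiv ℝ u x m) : ℝ) := by
  rw [gg']
  have := integral_add_right_eq_self (μ := (volume : Measure E2))
    (fun x : E2 => (inner ℝ (u (x - l • m)) (fderiv ℝ u x m) : ℝ)) (l • m)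
  rw [← this]
  congr 1
  funext x
  simp

lemma gg'_neg (n : E2) (l : ℝ) :
    gg' u (-n) l = -∫ x : E2, (inner ℝ (u (x + l • n)) (fderiv ℝ u x n) : ℝ) := by
  rw [gg']
  have h1 : ∀ x : E2, (inner ℝ (u x) (fderiv ℝ u (x + l • (-n)) (-n)) : ℝ)
      = -(inner ℝ (u x) (fderiv ℝ u (x - l • n) n) : ℝ) := by
    intro x
    have hx : x + l • (-n) = x - l • n := by rw [smul_neg, ← sub_eq_add_neg]
    rw [hx, map_neg, inner_neg_right]
  simp_rw [h1, integral_neg]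
  congr 1
  have := integral_add_right_eq_self (μ := (volume : Measure E2))
    (fun x : E2 => (inner ℝ (u (x + l • n)) (fderiv ℝ u x n) : ℝ)) (-(l • n))
  rw [← this]
  congr 1
  funext x
  rw [neg_add_cancel_right, sub_eq_add_neg]

include hu hc in
lemma gg'_symm (n : E2) (l : ℝ) :
    2 * gg' u n l = ∫ x : E2, (inner ℝ (u (x - l • n) - u (x + l • n)) (fderiv ℝ u x n) : ℝ) := by
  have hucont : Continuous u := hu.continuous
  have hDu : Continuous (fderiv ℝ u) := ((hu.of_le (by simp) : ContDiff ℝ 1 u)).continuous_fderiv (by simp)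
  have heq : gg' u n l = gg' u (-n) l := by
    have h1 := hasDerivAt_gg hu hc n l
    have h2 := hasDerivAt_gg hu hc (-n) l
    rw [gg_neg] at h2
    exact (h1.unique h2)
  have hDun : Continuous fun x : E2 => fderiv ℝ u x n :=
    (ContinuousLinearMap.apply ℝ E2 n).continuous.comp hDu
  have hintgen : ∀ a : E2, Integrable fun x : E2 => (inner ℝ (u (x + a)) (fderiv ℝ u x n) : ℝ) := by
    intro a
    apply Continuous.integrable_of_hasCompactSupport
    · exact (hucont.comp (by continuity)).inner hDun
    · apply (hc.fderiv (𝕜 := ℝ)).mono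
      intro x hx
      simp only [Function.mem_support] at hx ⊢
      intro h0; apply hx; rw [h0]; simp
  have hint1 : Integrable fun x : E2 => (inner ℝ (u (x - l • n)) (fderiv ℝ u x n) : ℝ) := by
    simpa [sub_eq_add_neg] using hintgen (-(l • n))
  have e1 : gg' u n l = ∫ x : E2, (inner ℝ (u (x - l • n)) (fderiv ℝ u x n) : ℝ) :=
    gg'_eq_left n l
  have e2 : gg' u n l = -∫ x : E2, (inner ℝ (u (x + l • n)) (fderiv ℝ u x n) : ℝ) := by
    rw [heq, gg'_neg]
  calc 2 * gg' u n l = gg' u n l + gg' u n l := by ring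
    _ = (∫ x : E2, (inner ℝ (u (x - l • n)) (fderiv ℝ u x n) : ℝ))
        - ∫ x : E2, (inner ℝ (u (x + l • n)) (fderiv ℝ u x n) : ℝ) := by
        nth_rewrite 1 [e1]; nth_rewrite 1 [e2]; ring
    _ = ∫ x : E2, (inner ℝ (u (x - l • n) - u (x + l • n)) (fderiv ℝ u x n) : ℝ) := by
        rw [← integral_sub hint1 (hintgen _)]
        congr 1; funext x
        rw [inner_sub_left]

include hu hc in
lemma gg'_bound (n : E2) (hn : ‖n‖ = 1) {l : ℝ} (hl : 0 ≤ l) :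
    |gg' u n l| ≤ l * ∫ x : E2, gradSq u x := by
  have hucont : Continuous u := hu.continuous
  have hDu : Continuous (fderiv ℝ u) := ((hu.of_le (by simp) : ContDiff ℝ 1 u)).continuous_fderiv (by simp)
  obtain ⟨M, hM⟩ := (hc.fderiv (𝕜 := ℝ)).exists_bound_of_continuous hDu
  have hMnn : 0 ≤ M := le_trans (norm_nonneg _) (hM 0)
  set D : E2 → ℝ := fun x => ‖fderiv ℝ u x‖ with hD
  have hDcont : Continuous D := hDu.norm
  have hDsupp : HasCompactSupport D := (hc.fderiv (𝕜 := ℝ)).norm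
  have hDnn : ∀ x, 0 ≤ D x := fun x => norm_nonneg _
  have hDbd : ∀ x, D x ≤ M := fun x => hM x
  have hD2cont : Continuous fun x => D x ^ 2 := by fun_prop
  have hD2supp : HasCompactSupport fun x => D x ^ 2 := by
    apply hDsupp.mono
    intro x hx
    simp only [Function.mem_support] at hx ⊢
    intro h0; apply hx; rw [h0]; ring
  have hD2int : Integrable fun x => D x ^ 2 := hD2cont.integrable_of_hasCompactSupport hD2supp
  have hgradint : Integrable (gradSq u) := gradSq_integrable hu hc
  have hgradnn : 0 ≤ ∫ x : E2, gradSq u x := integral_nonneg (gradSq_nonneg u)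
  -- FTC
  have hderiv : ∀ (x : E2) (t : ℝ),
      HasDerivAt (fun s : ℝ => u (x + s • n)) (fderiv ℝ u (x + t • n) n) t := by
    intro x t
    have haff : HasDerivAt (fun s : ℝ => x + s • n) n t := by
      simpa using ((hasDerivAt_id t).smul_const n).const_add x
    exact ((hu.differentiable (by simp) (x + t • n)).hasFDerivAt).comp_hasDerivAt t haff
  have haffc : ∀ x : E2, Continuous fun t : ℝ => x + t • n :=
    fun x => continuous_const.add (continuous_id.smul continuous_const)
  have hDn_cont : ∀ x : E2, Continuous fun t : ℝ => fderiv ℝ u (x + t • n) n :=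
    fun x => (ContinuousLinearMap.apply ℝ E2 n).continuous.comp (hDu.comp (haffc x))
  have hftc : ∀ x : E2,
      u (x + l • n) - u (x + (-l) • n) = ∫ t in (-l)..l, fderiv ℝ u (x + t • n) n := by
    intro x
    exact (intervalIntegral.integral_eq_sub_of_hasDerivAt (fun t _ => hderiv x t)
      (((hDn_cont x).intervalIntegrable _ _))).symm
  have hDtn_cont : ∀ t : ℝ, Continuous fun x : E2 => D (x + t • n) :=
    fun t => hDcont.comp (continuous_id.add continuous_const)
  have hdiffbd : ∀ x : E2, ‖u (x - l • n) - u (x + l • n)‖ ≤ ∫ t in (-l)..l, D (x + t • n) := by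
    intro x
    have h1 : ‖u (x - l • n) - u (x + l • n)‖ = ‖u (x + l • n) - u (x + (-l) • n)‖ := by
      rw [← norm_neg, neg_sub]
      congr 3
      rw [neg_smul, ← sub_eq_add_neg]
    rw [h1, hftc x]
    calc ‖∫ t in (-l)..l, fderiv ℝ u (x + t • n) n‖
        ≤ ∫ t in (-l)..l, ‖fderiv ℝ u (x + t • n) n‖ :=
          intervalIntegral.norm_integral_le_integral_norm (by linarith)
      _ ≤ ∫ t in (-l)..l, D (x + t • n) := by
          apply intervalIntegral.integral_mono_on (by linarith)
          · exact ((hDn_cont x).norm.intervalIntegrable _ _)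
          · exact ((hDcont.comp (haffc x)).intervalIntegrable _ _)
          · intro t _
            calc ‖fderiv ℝ u (x + t • n) n‖ ≤ ‖fderiv ℝ u (x + t • n)‖ * ‖n‖ :=
                  (fderiv ℝ u (x + t • n)).le_opNorm n
              _ = D (x + t • n) := by rw [hn, mul_one]
  set Φ : E2 → ℝ := fun x => (∫ t in (-l)..l, D (x + t • n)) * D x with hΦ
  have hjoint : Continuous (Function.uncurry fun (x : E2) (t : ℝ) => D (x + t • n)) := by
    apply hDcont.comp
    exact (continuous_fst.add (continuous_snd.smul continuous_const))
  have hΦcont : Continuous Φ := by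
    apply Continuous.mul ?_ hDcont
    exact intervalIntegral.continuous_parametric_intervalIntegral_of_continuous' hjoint _ _
  have hΦsupp : HasCompactSupport Φ := by
    apply hDsupp.mono
    intro x hx
    simp only [Function.mem_support] at hx ⊢
    intro h0; apply hx; rw [hΦ]; simp only [h0, mul_zero]
  have hΦint : Integrable Φ := hΦcont.integrable_of_hasCompactSupport hΦsupp
  have hΦnn : ∀ x, 0 ≤ Φ x := by
    intro x
    apply mul_nonneg _ (hDnn x)
    apply intervalIntegral.integral_nonneg (by linarith)
    intro t _; exact hDnn _
  -- step 1 : |2 g'| ≤ ∫ Φ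
  have hABcont : Continuous fun x : E2 =>
      (inner ℝ (u (x - l • n) - u (x + l • n)) (fderiv ℝ u x n) : ℝ) := by
    apply Continuous.inner
    · exact (hucont.comp (continuous_id.sub continuous_const)).sub
        (hucont.comp (continuous_id.add continuous_const))
    · exact (ContinuousLinearMap.apply ℝ E2 n).continuous.comp hDu
  have hABint : Integrable fun x : E2 =>
      (inner ℝ (u (x - l • n) - u (x + l • n)) (fderiv ℝ u x n) : ℝ) := by
    apply hABcont.integrable_of_hasCompactSupport
    apply (hc.fderiv (𝕜 := ℝ)).mono
    intro x hx
    simp only [Function.mem_support] at hx ⊢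
    intro h0; apply hx; rw [h0]; simp
  have step1 : |2 * gg' u n l| ≤ ∫ x : E2, Φ x := by
    rw [gg'_symm hu hc n l]
    calc |∫ x : E2, (inner ℝ (u (x - l • n) - u (x + l • n)) (fderiv ℝ u x n) : ℝ)|
        ≤ ∫ x : E2, ‖(inner ℝ (u (x - l • n) - u (x + l • n)) (fderiv ℝ u x n) : ℝ)‖ :=
          by rw [← Real.norm_eq_abs]; exact norm_integral_le_integral_norm _
      _ ≤ ∫ x : E2, Φ x := by
          apply integral_mono hABint.norm hΦint
          intro x
          calc ‖(inner ℝ (u (x - l • n) - u (x + l • n)) (fderiv ℝ u x n) : ℝ)‖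
              ≤ ‖u (x - l • n) - u (x + l • n)‖ * ‖fderiv ℝ u x n‖ := norm_inner_le_norm _ _
            _ ≤ (∫ t in (-l)..l, D (x + t • n)) * D x := by
                apply mul_le_mul (hdiffbd x) ?_ (norm_nonneg _)
                · apply intervalIntegral.integral_nonneg (by linarith)
                  intro t _; exact hDnn _
                · calc ‖fderiv ℝ u x n‖ ≤ ‖fderiv ℝ u x‖ * ‖n‖ := (fderiv ℝ u x).le_opNorm n
                    _ = D x := by rw [hn, mul_one]
  -- step 2 : ∫ Φ ≤ 2l ∫ gradSq
  set ν : Measure ℝ := volume.restrict (Set.Ioc (-l) l) with hν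
  have hνuniv : ν Set.univ = ENNReal.ofReal (2 * l) := by
    rw [hν, Measure.restrict_apply MeasurableSet.univ, Set.univ_inter, Real.volume_Ioc]
    congr 1; ring
  have hνfin : ν Set.univ < ⊤ := by rw [hνuniv]; exact ENNReal.ofReal_lt_top
  have hconv : ∀ x : E2, Φ x = ∫ t, D (x + t • n) * D x ∂ν := by
    intro x
    rw [hΦ]
    simp only
    rw [intervalIntegral.integral_of_le (by linarith : -l ≤ l)]
    rw [← hν]
    have := integral_smul_const (μ := ν) (fun t : ℝ => D (x + t • n)) (D x)
    simp only [smul_eq_mul] at this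
    rw [← this]
  have hmixcont : ∀ t : ℝ, Continuous fun x : E2 => D (x + t • n) * D x :=
    fun t => (hDtn_cont t).mul hDcont
  have hmixint : ∀ t : ℝ, Integrable fun x : E2 => D (x + t • n) * D x := by
    intro t
    apply (hmixcont t).integrable_of_hasCompactSupport
    apply hDsupp.mono
    intro x hx
    simp only [Function.mem_support] at hx ⊢
    intro h0; apply hx; rw [h0, mul_zero]
  have hprodf : Integrable
      (Function.uncurry fun (x : E2) (t : ℝ) => D (x + t • n) * D x)
      ((volume : Measure E2).prod ν) := by
    have hmeas : AEStronglyMeasurable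
        (Function.uncurry fun (x : E2) (t : ℝ) => D (x + t • n) * D x)
        ((volume : Measure E2).prod ν) :=
      (hjoint.mul (hDcont.comp continuous_fst)).aestronglyMeasurable
    rw [MeasureTheory.integrable_prod_iff hmeas]
    constructor
    · filter_upwards with x
      apply Integrable.mono' (g := fun _ : ℝ => M * D x)
      · exact integrable_const _
      · exact (((hDcont.comp (haffc x)).mul continuous_const
          : Continuous fun t : ℝ => D (x + t • n) * D x)).aestronglyMeasurable
      · filter_upwards with t
        simp only [Function.uncurry_apply_pair]
        rw [Real.norm_eq_abs, abs_of_nonneg (mul_nonneg (hDnn _) (hDnn _))]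
        exact mul_le_mul_of_nonneg_right (hDbd _) (hDnn x)
    · have : (fun x : E2 => ∫ t, ‖D (x + t • n) * D x‖ ∂ν) = Φ := by
        funext x
        rw [hconv x]
        congr 1
        funext t
        rw [Real.norm_eq_abs, abs_of_nonneg (mul_nonneg (hDnn _) (hDnn _))]
      simp only [Function.uncurry_apply_pair]
      rw [this]
      exact hΦint
  have hswap : ∫ x : E2, Φ x = ∫ t, (∫ x : E2, D (x + t • n) * D x) ∂ν := by
    calc ∫ x : E2, Φ x = ∫ x : E2, ∫ t, D (x + t • n) * D x ∂ν := by
          congr 1; funext x; exact hconv x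
      _ = ∫ t, (∫ x : E2, D (x + t • n) * D x) ∂ν := integral_integral_swap hprodf
  have hD2bound : ∫ x : E2, D x ^ 2 ≤ ∫ x : E2, gradSq u x :=
    integral_mono hD2int hgradint (fun x => opNorm_sq_le_gradSq hu x)
  have hper : ∀ t : ℝ, (∫ x : E2, D (x + t • n) * D x) ≤ ∫ x : E2, gradSq u x := by
    intro t
    have hTcont : Continuous fun x : E2 => D (x + t • n) ^ 2 :=
      hD2cont.comp (continuous_id.add continuous_const)
    have hTint : Integrable fun x : E2 => D (x + t • n) ^ 2 := by
      apply hTcont.integrable_of_hasCompactSupport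
      exact hD2supp.comp_homeomorph (Homeomorph.addRight (t • n))
    have h1 : (∫ x : E2, D (x + t • n) * D x)
        ≤ ∫ x : E2, (D (x + t • n) ^ 2 + D x ^ 2) / 2 := by
      apply integral_mono (hmixint t) ((hTint.add hD2int).div_const 2)
      intro x
      have := sq_nonneg (D (x + t • n) - D x)
      simp only [Pi.add_apply]
      nlinarith
    have h2 : ∫ x : E2, (D (x + t • n) ^ 2 + D x ^ 2) / 2
        = ((∫ x : E2, D (x + t • n) ^ 2) + ∫ x : E2, D x ^ 2) / 2 := by
      rw [integral_div, integral_add hTint hD2int]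
    have h3 : ∫ x : E2, D (x + t • n) ^ 2 = ∫ x : E2, D x ^ 2 :=
      integral_add_right_eq_self (μ := (volume : Measure E2)) (fun x => D x ^ 2) (t • n)
    calc (∫ x : E2, D (x + t • n) * D x) ≤ ∫ x : E2, (D (x + t • n) ^ 2 + D x ^ 2) / 2 := h1
      _ = ∫ x : E2, D x ^ 2 := by rw [h2, h3]; ring
      _ ≤ ∫ x : E2, gradSq u x := hD2bound
  have step2 : ∫ x : E2, Φ x ≤ 2 * l * ∫ x : E2, gradSq u x := by
    rw [hswap]
    calc ∫ t, (∫ x : E2, D (x + t • n) * D x) ∂ν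
        ≤ ∫ _t, (∫ x : E2, gradSq u x) ∂ν := by
          apply integral_mono_of_nonneg
          · filter_upwards with t
            exact integral_nonneg fun x => mul_nonneg (hDnn _) (hDnn _)
          · rw [hν]
            exact (integrableOn_const_iff).mpr (Or.inr (by rw [Real.volume_Ioc]; exact ENNReal.ofReal_lt_top))
          · filter_upwards with t
            exact hper t
      _ = (ν Set.univ).toReal * ∫ x : E2, gradSq u x := by
          rw [integral_const, smul_eq_mul]; rfl
      _ ≤ 2 * l * ∫ x : E2, gradSq u x := by
          apply mul_le_mul_of_nonneg_right _ hgradnn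
          rw [hνuniv, ENNReal.toReal_ofReal (by linarith)]
  have habs : |2 * gg' u n l| = 2 * |gg' u n l| := by
    rw [abs_mul]; norm_num
  rw [habs] at step1
  linarith [le_trans step1 step2]

include hu hc in
lemma gg_abs_le {Mu : ℝ} (hMu : ∀ x, ‖u x‖ ≤ Mu) (m : E2) (l : ℝ) :
    |gg u m l| ≤ ∫ x : E2, ‖u x‖ * Mu := by
  have hint : Integrable (fun x : E2 => ‖u x‖ * Mu) :=
    (hu.continuous.integrable_of_hasCompactSupport hc).norm.mul_const _
  rw [gg, ← Real.norm_eq_abs]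
  calc ‖∫ x : E2, (inner ℝ (u x) (u (x + l • m)) : ℝ)‖
      ≤ ∫ x : E2, ‖(inner ℝ (u x) (u (x + l • m)) : ℝ)‖ := norm_integral_le_integral_norm _
    _ ≤ ∫ x : E2, ‖u x‖ * Mu := by
        apply integral_mono_of_nonneg (Filter.Eventually.of_forall fun x => norm_nonneg _) hint
        filter_upwards with x
        calc ‖(inner ℝ (u x) (u (x + l • m)) : ℝ)‖ ≤ ‖u x‖ * ‖u (x + l • m)‖ :=
              norm_inner_le_norm _ _
          _ ≤ ‖u x‖ * Mu := mul_le_mul_of_nonneg_left (hMu _) (norm_nonneg _)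

include hu hc in
lemma gg'_abs_le {M : ℝ} (hM : ∀ x, ‖fderiv ℝ u x‖ ≤ M) {m : E2} (hm : ‖m‖ ≤ 1)
    (hMnn : 0 ≤ M) (l : ℝ) :
    |gg' u m l| ≤ ∫ x : E2, ‖u x‖ * M := by
  have hint : Integrable (fun x : E2 => ‖u x‖ * M) :=
    (hu.continuous.integrable_of_hasCompactSupport hc).norm.mul_const _
  rw [gg', ← Real.norm_eq_abs]
  calc ‖∫ x : E2, (inner ℝ (u x) (fderiv ℝ u (x + l • m) m) : ℝ)‖
      ≤ ∫ x : E2, ‖(inner ℝ (u x) (fderiv ℝ u (x + l • m) m) : ℝ)‖ :=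
        norm_integral_le_integral_norm _
    _ ≤ ∫ x : E2, ‖u x‖ * M := by
        apply integral_mono_of_nonneg (Filter.Eventually.of_forall fun x => norm_nonneg _) hint
        filter_upwards with x
        calc ‖(inner ℝ (u x) (fderiv ℝ u (x + l • m) m) : ℝ)‖
            ≤ ‖u x‖ * ‖fderiv ℝ u (x + l • m) m‖ := norm_inner_le_norm _ _
          _ ≤ ‖u x‖ * M := by
              apply mul_le_mul_of_nonneg_left _ (norm_nonneg _)
              calc ‖fderiv ℝ u (x + l • m) m‖ ≤ ‖fderiv ℝ u (x + l • m)‖ * ‖m‖ :=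
                    (fderiv ℝ u _).le_opNorm m
                _ ≤ M * 1 := mul_le_mul (hM _) hm (norm_nonneg _) hMnn
                _ = M := mul_one M

include hu hc in
lemma gg_cont_sphere (l : ℝ) :
    Continuous fun n : Metric.sphere (0 : E2) 1 => gg u (↑n) l := by
  have hucont : Continuous u := hu.continuous
  obtain ⟨Mu, hMu⟩ := hc.exists_bound_of_continuous hucont
  apply continuous_of_dominated (bound := fun x => ‖u x‖ * Mu)
  · intro n
    exact (hucont.inner (hucont.comp (continuous_id.add continuous_const))).aestronglyMeasurable
  · intro n
    filter_upwards with x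
    calc ‖(inner ℝ (u x) (u (x + l • (↑n : E2))) : ℝ)‖ ≤ ‖u x‖ * ‖u (x + l • (↑n : E2))‖ :=
          norm_inner_le_norm _ _
      _ ≤ ‖u x‖ * Mu := mul_le_mul_of_nonneg_left (hMu _) (norm_nonneg _)
  · exact (hucont.integrable_of_hasCompactSupport hc).norm.mul_const _
  · filter_upwards with x
    apply Continuous.inner continuous_const
    exact hucont.comp (continuous_const.add (continuous_subtype_val.const_smul l))

include hu hc in
lemma gg'_cont_sphere (l : ℝ) :
    Continuous fun n : Metric.sphere (0 : E2) 1 => gg' u (↑n) l := by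
  have hucont : Continuous u := hu.continuous
  have hDu : Continuous (fderiv ℝ u) := ((hu.of_le (by simp) : ContDiff ℝ 1 u)).continuous_fderiv (by simp)
  obtain ⟨M, hM⟩ := (hc.fderiv (𝕜 := ℝ)).exists_bound_of_continuous hDu
  apply continuous_of_dominated (bound := fun x => ‖u x‖ * M)
  · intro n
    apply Continuous.aestronglyMeasurable
    apply Continuous.inner hucont
    exact (ContinuousLinearMap.apply ℝ E2 (↑n : E2)).continuous.comp
      (hDu.comp (continuous_id.add continuous_const))
  · intro n
    filter_upwards with x
    calc ‖(inner ℝ (u x) (fderiv ℝ u (x + l • (↑n : E2)) (↑n : E2)) : ℝ)‖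
        ≤ ‖u x‖ * ‖fderiv ℝ u (x + l • (↑n : E2)) (↑n : E2)‖ := norm_inner_le_norm _ _
      _ ≤ ‖u x‖ * M := by
          apply mul_le_mul_of_nonneg_left _ (norm_nonneg _)
          calc ‖fderiv ℝ u (x + l • (↑n : E2)) (↑n : E2)‖
              ≤ ‖fderiv ℝ u (x + l • (↑n : E2))‖ * ‖(↑n : E2)‖ := (fderiv ℝ u _).le_opNorm _
            _ = ‖fderiv ℝ u (x + l • (↑n : E2))‖ := by
                rw [norm_eq_of_mem_sphere n, mul_one]
            _ ≤ M := hM _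
  · exact (hucont.integrable_of_hasCompactSupport hc).norm.mul_const _
  · filter_upwards with x
    have h1 : Continuous fun n : Metric.sphere (0 : E2) 1 =>
        fderiv ℝ u (x + l • (↑n : E2)) :=
      hDu.comp (continuous_const.add (continuous_subtype_val.const_smul l))
    have h2 : Continuous fun n : Metric.sphere (0 : E2) 1 =>
        fderiv ℝ u (x + l • (↑n : E2)) (↑n : E2) :=
      h1.clm_apply continuous_subtype_val
    exact Continuous.inner continuous_const h2

instance : IsFiniteMeasure sphσ := by
  unfold sphσ; infer_instance

include hu hc in
lemma hasDerivAt_outer (l : ℝ) :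
    HasDerivAt (fun l' => ∫ n : Metric.sphere (0 : E2) 1, gg u (↑n) l' ∂sphσ)
      (∫ n : Metric.sphere (0 : E2) 1, gg' u (↑n) l ∂sphσ) l := by
  have hucont : Continuous u := hu.continuous
  have hDu : Continuous (fderiv ℝ u) := ((hu.of_le (by simp) : ContDiff ℝ 1 u)).continuous_fderiv (by simp)
  obtain ⟨M, hM⟩ := (hc.fderiv (𝕜 := ℝ)).exists_bound_of_continuous hDu
  have hMnn : 0 ≤ M := le_trans (norm_nonneg _) (hM 0)
  have h := hasDerivAt_integral_of_dominated_loc_of_deriv_le (μ := sphσ)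
    (F := fun l' (n : Metric.sphere (0 : E2) 1) => gg u (↑n) l')
    (F' := fun l' (n : Metric.sphere (0 : E2) 1) => gg' u (↑n) l')
    (bound := fun _ => ∫ x : E2, ‖u x‖ * M) (x₀ := l) (s := Metric.ball l 1) (Metric.ball_mem_nhds l one_pos)
    ?meas ?int ?meas' ?bound ?bint ?diff
  · exact h.2
  case meas =>
    filter_upwards with l'
    exact (gg_cont_sphere hu hc l').aestronglyMeasurable
  case int =>
    obtain ⟨Mu, hMu⟩ := hc.exists_bound_of_continuous hucont
    apply Integrable.mono' (g := fun _ => ∫ x : E2, ‖u x‖ * Mu) (integrable_const _)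
      (gg_cont_sphere hu hc l).aestronglyMeasurable
    filter_upwards with n
    rw [Real.norm_eq_abs]
    exact gg_abs_le hu hc hMu _ l
  case meas' =>
    exact (gg'_cont_sphere hu hc l).aestronglyMeasurable
  case bound =>
    filter_upwards with n
    intro l' _
    rw [Real.norm_eq_abs]
    exact gg'_abs_le hu hc hM (le_of_eq (norm_eq_of_mem_sphere n)) hMnn l'
  case bint => exact integrable_const _
  case diff =>
    filter_upwards with n
    intro l' _
    exact hasDerivAt_gg hu hc (↑n) l'

include hu hc in
lemma hasDerivAt_GammaBar (l : ℝ) :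
    HasDerivAt (GammaBar u)
      ((sphσ Set.univ).toReal⁻¹ • ∫ n : Metric.sphere (0 : E2) 1, gg' u (↑n) l ∂sphσ) l := by
  have hout := hasDerivAt_outer hu hc l
  have heq : GammaBar u = fun l' =>
      (sphσ Set.univ).toReal⁻¹ • ∫ n : Metric.sphere (0 : E2) 1, gg u (↑n) l' ∂sphσ := by
    funext l'
    rw [GammaBar, average_eq]
    rfl
  rw [heq]
  exact hout.const_smul (sphσ Set.univ).toReal⁻¹

include hu hc in
lemma deriv_GammaBar_bound {l : ℝ} (hl : 0 ≤ l) :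
    |deriv (GammaBar u) l| ≤ l * ∫ x : E2, gradSq u x := by
  have hgradnn : 0 ≤ ∫ x : E2, gradSq u x := integral_nonneg (gradSq_nonneg u)
  have hd := (hasDerivAt_GammaBar hu hc l).deriv
  rw [hd]
  set c := (sphσ Set.univ).toReal⁻¹ with hcdef
  have hcnn : 0 ≤ c := by positivity
  have h1 : |∫ n : Metric.sphere (0 : E2) 1, gg' u (↑n) l ∂sphσ|
      ≤ (sphσ Set.univ).toReal * (l * ∫ x : E2, gradSq u x) := by
    rw [← Real.norm_eq_abs]
    calc ‖∫ n : Metric.sphere (0 : E2) 1, gg' u (↑n) l ∂sphσ‖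
        ≤ ∫ n : Metric.sphere (0 : E2) 1, ‖gg' u (↑n) l‖ ∂sphσ :=
          norm_integral_le_integral_norm _
      _ ≤ ∫ _n : Metric.sphere (0 : E2) 1, (l * ∫ x : E2, gradSq u x) ∂sphσ := by
          apply integral_mono_of_nonneg (Filter.Eventually.of_forall fun n => norm_nonneg _)
            (integrable_const _)
          filter_upwards with n
          rw [Real.norm_eq_abs]
          exact gg'_bound hu hc (↑n) (norm_eq_of_mem_sphere n) hl
      _ = (sphσ Set.univ).toReal * (l * ∫ x : E2, gradSq u x) := by
          rw [integral_const, smul_eq_mul]; rfl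
  have hcs : c * (sphσ Set.univ).toReal ≤ 1 := by
    rcases eq_or_ne ((sphσ Set.univ).toReal) 0 with h0 | h0
    · rw [h0, mul_zero]; norm_num
    · rw [hcdef, inv_mul_cancel₀ h0]
  calc |c • ∫ n : Metric.sphere (0 : E2) 1, gg' u (↑n) l ∂sphσ|
      = c * |∫ n : Metric.sphere (0 : E2) 1, gg' u (↑n) l ∂sphσ| := by
        rw [smul_eq_mul, abs_mul, abs_of_nonneg hcnn]
    _ ≤ c * ((sphσ Set.univ).toReal * (l * ∫ x : E2, gradSq u x)) :=
        mul_le_mul_of_nonneg_left h1 hcnn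
    _ = (c * (sphσ Set.univ).toReal) * (l * ∫ x : E2, gradSq u x) := by ring
    _ ≤ 1 * (l * ∫ x : E2, gradSq u x) := by
        apply mul_le_mul_of_nonneg_right hcs
        positivity
    _ = l * ∫ x : E2, gradSq u x := one_mul _

theorem GammaBar_first_deriv_bound :
    ∃ C : ℝ, 0 < C ∧
      ∀ (u : E2 → E2), ContDiff ℝ (⊤ : ℕ∞) u → HasCompactSupport u →
        (∀ x, pd 0 (fun y => u y 0) x + pd 1 (fun y => u y 1) x = 0) →
        (∀ l : ℝ, 0 ≤ l →
          DifferentiableAt ℝ (GammaBar u) l ∧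
          |deriv (GammaBar u) l| ≤ C * l * ∫ x : E2, gradSq u x) ∧
        deriv (GammaBar u) 0 = 0 := by
  refine ⟨1, one_pos, ?_⟩
  intro u hu hc _hdiv
  have hmain : ∀ l : ℝ, 0 ≤ l →
      DifferentiableAt ℝ (GammaBar u) l ∧
      |deriv (GammaBar u) l| ≤ 1 * l * ∫ x : E2, gradSq u x := by
    intro l hl
    refine ⟨(hasDerivAt_GammaBar hu hc l).differentiableAt, ?_⟩
    rw [one_mul]
    exact deriv_GammaBar_bound hu hc hl
  refine ⟨hmain, ?_⟩
  have h0 := (hmain 0 le_rfl).2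
  simp only [mul_zero, zero_mul, one_mul] at h0
  exact abs_eq_zero.mp (le_antisymm h0 (abs_nonneg _))

end
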